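/- Let b be a real number and define Φ : {(τ,η) ∈ ℝ² : τ > 0 and b²η² < 2τ} → ℝ² by Φ(τ,η) = ( √(2τ − b²η²)(2b²η² − τ)/(3τ³), b²η√(2τ − b²η²)/τ² ). Then Φ is differentiable on its domain and the determinant of its Jacobian matrix at (τ,η) equals b²/τ⁴. In particular, if b ≠ 0 the Jacobian determinant is strictly positive at every point of the domain. -/

import Mathlib

/-- First component of the closed-form period map of Family 2. -/
noncomputable def Psi1 (b τ η : ℝ) : ℝ :=
  Real.sqrt (2*τ - b^2*η^2) * (2*b^2*η^2 - τ) / (3*τ^3)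

/-- Second component of the closed-form period map of Family 2. -/
noncomputable def Psi2 (b τ η : ℝ) : ℝ :=
  b^2*η*Real.sqrt (2*τ - b^2*η^2) / τ^2

/-! Each partial derivative of `Psi1`, `Psi2` is a rational function of `τ`, `η` divided by
`s = √(2τ - b²η²)`, so the Jacobian determinant is a polynomial over `s² τ⁶`; its numerator
factors as `b² τ² (2τ - b²η²) = b² τ² s²`, which leaves `b²/τ⁴`. -/

open Real

section PartialDerivatives

variable {b τ η : ℝ}

lemma hasDerivAt_sqrt_discr_fst (hD : b^2*η^2 < 2*τ) :
    HasDerivAt (fun t => √(2*t - b^2*η^2)) (1 / √(2*τ - b^2*η^2)) τ := by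
  refine (((hasDerivAt_id' τ).const_mul 2).sub_const (b^2*η^2)).sqrt (by linarith)
    |>.congr_deriv ?_
  ring

lemma hasDerivAt_sqrt_discr_snd (hD : b^2*η^2 < 2*τ) :
    HasDerivAt (fun e => √(2*τ - b^2*e^2)) (-(b^2*η) / √(2*τ - b^2*η^2)) η := by
  refine (((hasDerivAt_pow 2 η).const_mul (b^2)).const_sub (2*τ)).sqrt (by linarith)
    |>.congr_deriv ?_
  ring

lemma hasDerivAt_Psi1_fst (hτ : τ ≠ 0) (hD : b^2*η^2 < 2*τ) :
    HasDerivAt (fun t => Psi1 b t η)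
      ((τ^2 - 4*(b^2*η^2)*τ + 2*(b^2*η^2)^2) / (√(2*τ - b^2*η^2) * τ^4)) τ := by
  refine ((hasDerivAt_sqrt_discr_fst hD).fun_mul ((hasDerivAt_id' τ).const_sub _)).fun_div
    ((hasDerivAt_pow 3 τ).const_mul 3) (by positivity) |>.congr_deriv ?_
  have hs : 0 < √(2*τ - b^2*η^2) := sqrt_pos.mpr (by linarith)
  field_simp
  rw [sq_sqrt (by linarith)]
  norm_num
  ring

lemma hasDerivAt_Psi1_snd (hτ : τ ≠ 0) (hD : b^2*η^2 < 2*τ) :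
    HasDerivAt (fun e => Psi1 b τ e)
      (b^2*η*(3*τ - 2*b^2*η^2) / (√(2*τ - b^2*η^2) * τ^3)) η := by
  refine ((hasDerivAt_sqrt_discr_snd hD).fun_mul
    (((hasDerivAt_pow 2 η).const_mul (2*b^2)).sub_const τ)).div_const (3*τ^3) |>.congr_deriv ?_
  have hs : 0 < √(2*τ - b^2*η^2) := sqrt_pos.mpr (by linarith)
  field_simp
  rw [sq_sqrt (by linarith)]
  norm_num
  ring

lemma hasDerivAt_Psi2_fst (hτ : τ ≠ 0) (hD : b^2*η^2 < 2*τ) :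
    HasDerivAt (fun t => Psi2 b t η)
      (b^2*η*(2*b^2*η^2 - 3*τ) / (√(2*τ - b^2*η^2) * τ^3)) τ := by
  refine ((hasDerivAt_sqrt_discr_fst hD).const_mul (b^2*η)).fun_div
    (hasDerivAt_pow 2 τ) (by positivity) |>.congr_deriv ?_
  have hs : 0 < √(2*τ - b^2*η^2) := sqrt_pos.mpr (by linarith)
  field_simp
  rw [sq_sqrt (by linarith)]
  norm_num
  ring

lemma hasDerivAt_Psi2_snd (hτ : τ ≠ 0) (hD : b^2*η^2 < 2*τ) :
    HasDerivAt (fun e => Psi2 b τ e)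
      (2*b^2*(τ - b^2*η^2) / (√(2*τ - b^2*η^2) * τ^2)) η := by
  refine (((hasDerivAt_id' η).const_mul (b^2)).fun_mul (hasDerivAt_sqrt_discr_snd hD)).div_const
    (τ^2) |>.congr_deriv ?_
  have hs : 0 < √(2*τ - b^2*η^2) := sqrt_pos.mpr (by linarith)
  field_simp
  rw [sq_sqrt (by linarith)]
  ring

lemma differentiableAt_Psi (hτ : τ ≠ 0) (hD : b^2*η^2 < 2*τ) :
    DifferentiableAt ℝ (fun p : ℝ × ℝ => (Psi1 b p.1 p.2, Psi2 b p.1 p.2)) (τ, η) := by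
  unfold Psi1 Psi2
  fun_prop (disch := first | positivity | (apply ne_of_gt; linarith))

lemma jacobian_det_Psi (hτ : τ ≠ 0) (hD : b^2*η^2 < 2*τ) :
    deriv (fun t => Psi1 b t η) τ * deriv (fun e => Psi2 b τ e) η
      - deriv (fun e => Psi1 b τ e) η * deriv (fun t => Psi2 b t η) τ = b^2 / τ^4 := by
  rw [(hasDerivAt_Psi1_fst hτ hD).deriv, (hasDerivAt_Psi1_snd hτ hD).deriv,
    (hasDerivAt_Psi2_fst hτ hD).deriv, (hasDerivAt_Psi2_snd hτ hD).deriv]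
  have hD' : 0 < 2*τ - b^2*η^2 := by linarith
  have hs : 0 < √(2*τ - b^2*η^2) := sqrt_pos.mpr hD'
  have hs2 : √(2*τ - b^2*η^2) ^ 2 = 2*τ - b^2*η^2 := sq_sqrt hD'.le
  generalize √(2*τ - b^2*η^2) = s at hs hs2 ⊢
  field_simp
  linear_combination (-(b^2*τ^2)) * hs2

end PartialDerivatives

/-- The closed-form period map of Family 2 is differentiable on
`{τ > 0, b²η² < 2τ}`, its Jacobian determinant equals `b²/τ⁴`, and the latter is
positive when `b ≠ 0`. -/
theorem stmt_12 (b : ℝ) :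
    (∀ τ η : ℝ, 0 < τ → b^2*η^2 < 2*τ →
      DifferentiableAt ℝ (fun p : ℝ × ℝ => (Psi1 b p.1 p.2, Psi2 b p.1 p.2)) (τ, η)) ∧
    (∀ τ η : ℝ, 0 < τ → b^2*η^2 < 2*τ →
      deriv (fun t => Psi1 b t η) τ * deriv (fun e => Psi2 b τ e) η
        - deriv (fun e => Psi1 b τ e) η * deriv (fun t => Psi2 b t η) τ
        = b^2 / τ^4) ∧
    (b ≠ 0 → ∀ τ η : ℝ, 0 < τ → b^2*η^2 < 2*τ → 0 < b^2 / τ^4) :=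
  ⟨fun _ _ hτ hD => differentiableAt_Psi hτ.ne' hD,
    fun _ _ hτ hD => jacobian_det_Psi hτ.ne' hD,
    fun hb _ _ _ _ => by positivity⟩
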